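/- For every sequence of measure spaces $\{(\Omega_i,\Sigma_i,\mu_i)\}_{i\in\mathbb{N}}$ there exists a measure $\mu$ on the product $\sigma$-algebra $\bigotimes_{i\in\mathbb{N}}\Sigma_i$ on $\prod_{i\in\mathbb{N}}\Omega_i$ such that for every finite rectangle $\mathscr{C} = \prod_{i\in\mathbb{N}}\mathscr{C}_i$ ($\mathscr{C}_i\in\Sigma_i$, $\prod_i \mu_i(\mathscr{C}_i)$ convergent in $[0,\infty)$) one has $\mu(\mathscr{C}) = \prod_{i\in\mathbb{N}} \mu_i(\mathscr{C}_i)$. -/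

import Mathlib

/-!
The measure is Carathéodory's construction from the volumes of finite rectangles. A coordinate
cylinder cuts a finite rectangle into two finite rectangles whose volumes add up, so every set of
the product σ-algebra is Carathéodory measurable. The substance is that a finite rectangle `∏ Cᵢ`
of positive volume `v` is not covered by countably many finite rectangles `∏ Dₙᵢ` of smaller total
volume: under the infinite product `π` of the probability measures `μᵢ[|Cᵢ]` one has
`π (∏ Cᵢ) = 1` and `π (∏ Dₙᵢ) ≤ vol Dₙ / v`, and `π` is countably subadditive.
-/

open MeasureTheory Filter Set
open scoped ENNReal

/-- `HasVol μ C v` says that the rectangle `∏ᵢ Cᵢ` is a *finite rectangle*: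
all sides are measurable with finite measure and the infinite product
`∏ᵢ μᵢ(Cᵢ)` converges to the finite value `v ∈ [0,∞)` (its volume). -/
def HasVol {Ω : ℕ → Type*} [∀ i, MeasurableSpace (Ω i)]
    (μ : ∀ i, Measure (Ω i)) (C : ∀ i, Set (Ω i)) (v : ℝ) : Prop :=
  (∀ i, MeasurableSet (C i)) ∧ (∀ i, μ i (C i) ≠ ∞) ∧
    Tendsto (fun m => ∏ i ∈ Finset.range m, (μ i (C i)).toReal) atTop (nhds v)

theorem tendsto_prod_range_update {a : ℕ → ℝ} {v : ℝ}
    (h : Tendsto (fun m => ∏ j ∈ Finset.range m, a j) atTop (nhds v)) (i : ℕ) {b : ℝ}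
    (hb : a i = 0 → b = 0) :
    Tendsto (fun m => ∏ j ∈ Finset.range m, Function.update a i b j) atTop
      (nhds (b / a i * v)) := by
  refine (h.const_mul (b / a i)).congr' ?_
  filter_upwards [eventually_gt_atTop i] with m hm
  have him : i ∈ Finset.range m := Finset.mem_range.2 hm
  rw [Finset.prod_update_of_mem him, ← Finset.mul_prod_erase _ _ him,
    Finset.sdiff_singleton_eq_erase]
  rcases eq_or_ne (a i) 0 with ha | ha
  · simp [ha, hb ha]
  · field_simp

theorem Set.univ_pi_update_inter {ι : Type*} [DecidableEq ι] {α : ι → Type*}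
    (C : ∀ i, Set (α i)) (i : ι) (S : Set (α i)) :
    univ.pi (Function.update C i (C i ∩ S)) = univ.pi C ∩ Function.eval i ⁻¹' S := by
  rw [← univ_pi_update_univ, ← pi_inter_distrib]
  congr 1
  ext j : 1
  rcases eq_or_ne j i with rfl | hj <;> simp [*]

namespace HasVol

variable {Ω : ℕ → Type*} [∀ i, MeasurableSpace (Ω i)] {μ : ∀ i, Measure (Ω i)}
  {C : ∀ i, Set (Ω i)} {v : ℝ}

open ProbabilityTheory

theorem nonneg (h : HasVol μ C v) : 0 ≤ v :=
  ge_of_tendsto' h.2.2 fun _ => Finset.prod_nonneg fun _ _ => ENNReal.toReal_nonneg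

theorem eq_zero_of_measure_eq_zero (h : HasVol μ C v) {i : ℕ} (h0 : μ i (C i) = 0) :
    v = 0 := by
  refine tendsto_nhds_unique h.2.2 (tendsto_const_nhds.congr' ?_)
  filter_upwards [eventually_gt_atTop i] with m hm
  exact (Finset.prod_eq_zero (Finset.mem_range.2 hm) (by simp [h0])).symm

theorem update (h : HasVol μ C v) (i : ℕ) {E : Set (Ω i)} (hE : MeasurableSet E)
    (hEC : E ⊆ C i) :
    HasVol μ (Function.update C i E) ((μ i E).toReal / (μ i (C i)).toReal * v) := by
  have hEfin : μ i E ≠ ∞ := ne_top_of_le_ne_top (h.2.1 i) (measure_mono hEC)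
  refine ⟨fun j => ?_, fun j => ?_, ?_⟩
  · rcases eq_or_ne j i with rfl | hj
    · simpa using hE
    · simpa [hj] using h.1 j
  · rcases eq_or_ne j i with rfl | hj
    · simpa using hEfin
    · simpa [hj] using h.2.1 j
  · simp_rw [Function.apply_update (fun j s => (μ j s).toReal)]
    refine tendsto_prod_range_update h.2.2 i fun h0 => ?_
    rw [ENNReal.toReal_eq_zero_iff, or_iff_left (h.2.1 i)] at h0
    simp [measure_mono_null hEC h0]

theorem exists_add_eq (h : HasVol μ C v) (i : ℕ) {S : Set (Ω i)} (hS : MeasurableSet S) :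
    ∃ v₁ v₂ : ℝ, v₁ + v₂ = v ∧ HasVol μ (Function.update C i (C i ∩ S)) v₁ ∧
      HasVol μ (Function.update C i (C i ∩ Sᶜ)) v₂ := by
  refine ⟨_, _, ?_, h.update i ((h.1 i).inter hS) inter_subset_left,
    h.update i ((h.1 i).inter hS.compl) inter_subset_left⟩
  have hfin : μ i (C i) ≠ ∞ := h.2.1 i
  rcases eq_or_ne (μ i (C i)) 0 with h0 | h0
  · simp [h.eq_zero_of_measure_eq_zero h0]
  have hsum : (μ i (C i ∩ S)).toReal + (μ i (C i ∩ Sᶜ)).toReal = (μ i (C i)).toReal := by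
    rw [← ENNReal.toReal_add (measure_ne_top_of_subset inter_subset_left hfin)
      (measure_ne_top_of_subset inter_subset_left hfin), ← sdiff_eq, measure_inter_add_sdiff _ hS]
  have hpos : (μ i (C i)).toReal ≠ 0 := ENNReal.toReal_ne_zero.2 ⟨h0, hfin⟩
  rw [← add_mul, ← add_div, hsum, div_self hpos, one_mul]

theorem infinitePi_cond_univ_pi_le {w : ℝ} (hC : HasVol μ C v) (hv : 0 < v)
    {D : ∀ i, Set (Ω i)} (hD : HasVol μ D w)
    [∀ i, IsProbabilityMeasure (μ i)[|C i]] :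
    Measure.infinitePi (fun i => (μ i)[|C i]) (univ.pi D) ≤ ENNReal.ofReal (w / v) := by
  have hC0 : ∀ i, μ i (C i) ≠ 0 := fun i h0 => hv.ne' (hC.eq_zero_of_measure_eq_zero h0)
  have hratio : ∀ i, ENNReal.ofReal ((μ i (D i)).toReal / (μ i (C i)).toReal)
      = μ i (D i) / μ i (C i) := fun i => by
    rw [← ENNReal.toReal_div, ENNReal.ofReal_toReal (ENNReal.div_ne_top (hD.2.1 i) (hC0 i))]
  have hle : ∀ m, Measure.infinitePi (fun i => (μ i)[|C i]) (univ.pi D)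
      ≤ ENNReal.ofReal (∏ i ∈ Finset.range m, (μ i (D i)).toReal / (μ i (C i)).toReal) := by
    intro m
    rw [ENNReal.ofReal_prod_of_nonneg fun _ _ => by positivity]
    calc Measure.infinitePi (fun i => (μ i)[|C i]) (univ.pi D)
        ≤ Measure.infinitePi (fun i => (μ i)[|C i]) ((Finset.range m : Set ℕ).pi D) :=
          measure_mono (pi_mono' (fun _ _ => le_rfl) (subset_univ _))
      _ = ∏ i ∈ Finset.range m, (μ i)[|C i] (D i) :=
          Measure.infinitePi_pi _ fun i _ => hD.1 i
      _ ≤ ∏ i ∈ Finset.range m, μ i (D i) / μ i (C i) := by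
          gcongr with i
          rw [cond_apply (hC.1 i), ENNReal.div_eq_inv_mul]
          gcongr
          exact inter_subset_right
      _ = _ := by simp_rw [hratio]
  have hlim : Tendsto (fun m => ∏ i ∈ Finset.range m, (μ i (D i)).toReal / (μ i (C i)).toReal)
      atTop (nhds (w / v)) := by
    simp_rw [Finset.prod_div_distrib]
    exact hD.2.2.div hC.2.2 hv.ne'
  exact ge_of_tendsto' (ENNReal.tendsto_ofReal hlim) hle

theorem ofReal_le_tsum_of_subset_iUnion (hC : HasVol μ C v) {D : ℕ → ∀ i, Set (Ω i)}
    {w : ℕ → ℝ} (hD : ∀ n, HasVol μ (D n) (w n)) (hcov : univ.pi C ⊆ ⋃ n, univ.pi (D n)) :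
    ENNReal.ofReal v ≤ ∑' n, ENNReal.ofReal (w n) := by
  rcases le_or_gt v 0 with hv | hv
  · simp [ENNReal.ofReal_eq_zero.2 hv]
  have hC0 : ∀ i, μ i (C i) ≠ 0 := fun i h0 => hv.ne' (hC.eq_zero_of_measure_eq_zero h0)
  have : ∀ i, IsProbabilityMeasure (μ i)[|C i] :=
    fun i => cond_isProbabilityMeasure_of_finite (hC0 i) (hC.2.1 i)
  set π := Measure.infinitePi fun i => (μ i)[|C i]
  have hπC : π (univ.pi C) = 1 := by
    simp [π, Measure.infinitePi_pi_univ _ hC.1, cond_apply_self (hC0 _) (hC.2.1 _)]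
  calc ENNReal.ofReal v = ENNReal.ofReal v * π (univ.pi C) := by rw [hπC, mul_one]
    _ ≤ ENNReal.ofReal v * ∑' n, π (univ.pi (D n)) := by
        gcongr
        exact measure_mono hcov |>.trans (measure_iUnion_le _)
    _ ≤ ENNReal.ofReal v * ∑' n, ENNReal.ofReal (w n / v) := by
        gcongr with n
        exact infinitePi_cond_univ_pi_le hC hv (hD n)
    _ = ∑' n, ENNReal.ofReal (w n) := by
        rw [← ENNReal.tsum_mul_left]
        refine tsum_congr fun n => ?_
        rw [← ENNReal.ofReal_mul hv.le, mul_div_cancel₀ _ hv.ne']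

end HasVol

section RectangleVolume

variable {Ω : ℕ → Type*} [∀ i, MeasurableSpace (Ω i)]

/-- A set may be the product of several families (`∅` is), hence the infimum; a set that is not a
finite rectangle gets `⊤`. -/
noncomputable def rectVol (μ : ∀ i, Measure (Ω i)) (A : Set (∀ i, Ω i)) : ℝ≥0∞ :=
  ⨅ (C : ∀ i, Set (Ω i)) (v : ℝ) (_ : HasVol μ C v) (_ : univ.pi C = A), ENNReal.ofReal v

variable {μ : ∀ i, Measure (Ω i)}

theorem rectVol_univ_pi_le {C : ∀ i, Set (Ω i)} {v : ℝ} (h : HasVol μ C v) :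
    rectVol μ (univ.pi C) ≤ ENNReal.ofReal v :=
  iInf₂_le_of_le C v (iInf₂_le_of_le h rfl le_rfl)

theorem exists_hasVol_of_rectVol_lt {A : Set (∀ i, Ω i)} {r : ℝ≥0∞} (h : rectVol μ A < r) :
    ∃ C v, HasVol μ C v ∧ univ.pi C = A ∧ ENNReal.ofReal v < r := by
  simpa only [rectVol, iInf_lt_iff, exists_prop] using h

theorem hasVol_empty : HasVol μ (fun i => (∅ : Set (Ω i))) 0 := by
  refine ⟨fun _ => .empty, fun _ => by simp, tendsto_const_nhds.congr' ?_⟩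
  filter_upwards [eventually_gt_atTop 0] with m hm
  exact (Finset.prod_eq_zero (Finset.mem_range.2 hm) (by simp)).symm

theorem rectVol_empty : rectVol μ ∅ = 0 := by
  simpa using rectVol_univ_pi_le (hasVol_empty (μ := μ))

theorem pi_le_caratheodory_ofFunction_rectVol :
    MeasurableSpace.pi ≤ (OuterMeasure.ofFunction (rectVol μ) rectVol_empty).caratheodory := by
  refine iSup_le fun i => MeasurableSpace.comap_le_iff_le_map.2 fun S hS => ?_
  refine OuterMeasure.ofFunction_caratheodory fun A => le_iInf₂ fun C v => le_iInf₂ fun hC hA => ?_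
  subst hA
  obtain ⟨v₁, v₂, hv, h₁, h₂⟩ := hC.exists_add_eq i hS
  rw [sdiff_eq, ← preimage_compl, ← univ_pi_update_inter, ← univ_pi_update_inter, ← hv,
    ENNReal.ofReal_add h₁.nonneg h₂.nonneg]
  exact add_le_add (rectVol_univ_pi_le h₁) (rectVol_univ_pi_le h₂)

theorem HasVol.ofReal_le_tsum_rectVol {C : ∀ i, Set (Ω i)} {v : ℝ} (hC : HasVol μ C v)
    {t : ℕ → Set (∀ i, Ω i)} (hcov : univ.pi C ⊆ ⋃ n, t n) :
    ENNReal.ofReal v ≤ ∑' n, rectVol μ (t n) := by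
  refine ENNReal.le_of_forall_pos_le_add fun ε hε hfin => ?_
  obtain ⟨δ, hδpos, hδsum⟩ :=
    ENNReal.exists_pos_sum_of_countable (ENNReal.coe_ne_zero.2 hε.ne') ℕ
  have hnear : ∀ n, ∃ D w, HasVol μ D w ∧ univ.pi D = t n ∧
      ENNReal.ofReal w < rectVol μ (t n) + δ n := fun n =>
    exists_hasVol_of_rectVol_lt <| ENNReal.lt_add_right
      (ne_top_of_le_ne_top hfin.ne (ENNReal.le_tsum n)) (by simpa using (hδpos n).ne')
  choose D w hD hDt hw using hnear
  calc ENNReal.ofReal v ≤ ∑' n, ENNReal.ofReal (w n) :=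
        hC.ofReal_le_tsum_of_subset_iUnion hD (by simpa only [hDt] using hcov)
    _ ≤ ∑' n, (rectVol μ (t n) + δ n) := ENNReal.tsum_le_tsum fun n => (hw n).le
    _ = ∑' n, rectVol μ (t n) + ∑' n, (δ n : ℝ≥0∞) := ENNReal.tsum_add
    _ ≤ ∑' n, rectVol μ (t n) + ε := by gcongr

end RectangleVolume

theorem stmt_11 {Ω : ℕ → Type*} [∀ i, MeasurableSpace (Ω i)] (μ : ∀ i, Measure (Ω i)) :
    ∃ ν : Measure (∀ i, Ω i),
      ∀ (C : ∀ i, Set (Ω i)) (v : ℝ), HasVol μ C v →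
        ν (Set.univ.pi C) = ENNReal.ofReal v := by
  refine ⟨(OuterMeasure.ofFunction (rectVol μ) rectVol_empty).toMeasure
    pi_le_caratheodory_ofFunction_rectVol, fun C v hC => ?_⟩
  rw [toMeasure_apply _ _ (.univ_pi hC.1)]
  refine le_antisymm ((OuterMeasure.ofFunction_le _).trans (rectVol_univ_pi_le hC)) ?_
  rw [OuterMeasure.ofFunction_apply]
  exact le_iInf₂ fun t hcov => hC.ofReal_le_tsum_rectVol hcov
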